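/- Let c₁ ≥ c₂ ≥ ... ≥ c_m be reals and let 𝒞 ⊆ ℝ^m be the set of all vectors whose entries are permutations of (c₁,...,c_m). For x ∈ ℝ^m and a permutation σ that sorts x in decreasing order (x_{σ(1)} ≥ ... ≥ x_{σ(m)}), the vector y defined by y_{σ(i)} = cᵢ is a nearest point of 𝒞 to x; i.e., y ∈ P_𝒞(x). -/
import Mathlib


/-- Projection onto the set of permutations of a fixed decreasing vector
`c₁ ≥ ⋯ ≥ c_m`: if `σ` sorts `x` decreasingly, then the vector `y` with
`y (σ i) = c i` is a nearest point of the permutation set `𝒞` to `x`. -/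
theorem projection_onto_permutation_set (m : ℕ) (c : Fin m → ℝ)
    (hc : ∀ i j : Fin m, i ≤ j → c j ≤ c i)
    (𝒞 : Set (EuclideanSpace ℝ (Fin m)))
    (h𝒞 : 𝒞 = {v : EuclideanSpace ℝ (Fin m) |
      ∃ τ : Equiv.Perm (Fin m), ∀ i, v i = c (τ i)})
    (x : EuclideanSpace ℝ (Fin m)) (σ : Equiv.Perm (Fin m))
    (hσ : ∀ i j : Fin m, i ≤ j → x (σ j) ≤ x (σ i))
    (y : EuclideanSpace ℝ (Fin m)) (hy : ∀ i, y (σ i) = c i) :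
    y ∈ 𝒞 ∧ ∀ z ∈ 𝒞, ‖x - y‖ ≤ ‖x - z‖ := by
  constructor
  · rw [h𝒞]
    exact ⟨σ.symm, fun i => by rw [← hy (σ.symm i), Equiv.apply_symm_apply]⟩
  · intro z hz
    rw [h𝒞] at hz
    obtain ⟨τ, hzτ⟩ := hz
    -- rearrangement inequality
    have hmono : Monovary (fun i => x (σ i)) c := by
      intro i j hij
      rcases le_or_gt i j with h | h
      · exact absurd (hc i j h) (not_le.2 hij)
      · exact hσ j i h.le
    have hre : ∑ i, x (σ i) * c ((σ.trans τ) i) ≤ ∑ i, x (σ i) * c i :=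
      hmono.sum_mul_comp_perm_le_sum_mul
    have hxz : ∑ i, x i * z i ≤ ∑ i, x i * y i := by
      have e1 : ∑ i, x i * y i = ∑ i, x (σ i) * c i := by
        rw [← Equiv.sum_comp σ (fun i => x i * y i)]
        exact Finset.sum_congr rfl fun i _ => by rw [hy]
      have e2 : ∑ i, x i * z i = ∑ i, x (σ i) * c ((σ.trans τ) i) := by
        rw [← Equiv.sum_comp σ (fun i => x i * z i)]
        exact Finset.sum_congr rfl fun i _ => by rw [hzτ]; rfl
      rw [e1, e2]; exact hre
    have hyz : ∑ i, y i ^ 2 = ∑ i, z i ^ 2 := by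
      have e1 : ∑ i, y i ^ 2 = ∑ i, c i ^ 2 := by
        rw [← Equiv.sum_comp σ (fun i => y i ^ 2)]
        exact Finset.sum_congr rfl fun i _ => by rw [hy]
      have e2 : ∑ i, z i ^ 2 = ∑ i, c i ^ 2 := by
        rw [← Equiv.sum_comp τ (fun i => c i ^ 2)]
        exact Finset.sum_congr rfl fun i _ => by rw [hzτ]
      rw [e1, e2]
    have key : ∑ i, (x i - y i) ^ 2 ≤ ∑ i, (x i - z i) ^ 2 := by
      have ey : ∑ i, (x i - y i) ^ 2
          = ∑ i, x i ^ 2 - 2 * ∑ i, x i * y i + ∑ i, y i ^ 2 := by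
        rw [Finset.mul_sum, ← Finset.sum_sub_distrib, ← Finset.sum_add_distrib]
        exact Finset.sum_congr rfl fun i _ => by ring
      have ez : ∑ i, (x i - z i) ^ 2
          = ∑ i, x i ^ 2 - 2 * ∑ i, x i * z i + ∑ i, z i ^ 2 := by
        rw [Finset.mul_sum, ← Finset.sum_sub_distrib, ← Finset.sum_add_distrib]
        exact Finset.sum_congr rfl fun i _ => by ring
      rw [ey, ez]; linarith
    rw [EuclideanSpace.norm_eq, EuclideanSpace.norm_eq]
    apply Real.sqrt_le_sqrt
    simpa [sq_abs] using key
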